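/- arXiv:2508.10884 — 6 statements merged into one kernel-verified Lean document; each statement's English description precedes it below -/
import Mathlib

section
/- Let K be a field with a field topology τ satisfying the polynomial implicit function theorem. If τ is not discrete, then K is large: for every polynomial f ∈ K[x,y] and (a,b) ∈ K² with f(a,b)=0 and ∂f/∂y(a,b) ≠ 0, the polynomial f has infinitely many zeros in K². -/
open MvPolynomial

/-- A topology on a field `K` satisfies the polynomial implicit function theorem if
whenever a tuple of polynomials `f` in variables `x_1,…,x_m,y_1,…,y_n` vanishes at `(a,b)`
with invertible Jacobian in the `y` variables, there is a continuous local implicit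
function `s` with `s a = b` solving `f(x, s x) = 0`. -/
def SatisfiesPolyImplicitFT (K : Type*) [Field K] [TopologicalSpace K] : Prop :=
  ∀ (m n : ℕ) (f : Fin n → MvPolynomial (Fin m ⊕ Fin n) K) (a : Fin m → K) (b : Fin n → K),
    (∀ i, eval (Sum.elim a b) (f i) = 0) →
    IsUnit (Matrix.of fun i j : Fin n => eval (Sum.elim a b) (pderiv (Sum.inr j) (f i))) →
    ∃ P : Set (Fin m → K), ∃ S : Set (Fin n → K), IsOpen P ∧ IsOpen S ∧ a ∈ P ∧ b ∈ S ∧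
      ∃ s : (Fin m → K) → (Fin n → K), ContinuousOn s P ∧ s a = b ∧
        ∀ a' ∈ P, s a' ∈ S ∧ ∀ i, eval (Sum.elim a' (s a')) (f i) = 0

/-!
The implicit function theorem gives, around `a`, an open set `U` and a function `s` with
`f(x, s x) = 0` on `U`. The graph of `s` over `U` is an infinite subset of the zero set, since
in a non-discrete Hausdorff topological group every nonempty open set is infinite: a finite one
would make a point, hence by translation every point, open.
-/

theorem IsOpen.infinite_of_not_discreteTopology {G : Type*} [AddGroup G] [TopologicalSpace G]
    [ContinuousAdd G] [T1Space G] (hnd : ¬ DiscreteTopology G) {U : Set G} (hU : IsOpen U)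
    (hne : U.Nonempty) : U.Infinite := by
  obtain ⟨x, hx⟩ := hne
  intro hfin
  exact hnd <| (AddAction.IsPretransitive.discreteTopology_iff G x).mpr
    (isOpen_singleton_of_finite_mem_nhds x (hU.mem_nhds hx) hfin)

namespace SatisfiesPolyImplicitFT

private def splitVars : Fin 2 → Fin 1 ⊕ Fin 1 := ![Sum.inl 0, Sum.inr 0]

private lemma splitVars_injective : Function.Injective splitVars := by
  decide

private lemma eval_rename_splitVars {K : Type*} [CommRing K] (p : MvPolynomial (Fin 2) K)
    (u v : K) :
    eval (Sum.elim (fun _ : Fin 1 ↦ u) (fun _ ↦ v)) (rename splitVars p) = eval ![u, v] p := by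
  have : Sum.elim (fun _ : Fin 1 ↦ u) (fun _ ↦ v) ∘ splitVars = ![u, v] := by
    funext i
    fin_cases i <;> rfl
  rw [eval_rename, this]

theorem exists_isOpen_forall_eval_eq_zero {K : Type*} [Field K] [TopologicalSpace K]
    (hIFT : SatisfiesPolyImplicitFT K) {f : MvPolynomial (Fin 2) K} {a b : K}
    (hz : eval ![a, b] f = 0) (hd : eval ![a, b] (pderiv 1 f) ≠ 0) :
    ∃ U : Set K, IsOpen U ∧ a ∈ U ∧ ∃ s : K → K, ∀ x ∈ U, eval ![x, s x] f = 0 := by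
  have hpderiv : pderiv (Sum.inr 0) (rename splitVars f) = rename splitVars (pderiv 1 f) :=
    pderiv_rename splitVars_injective 1 f
  obtain ⟨P, _, hP, -, haP, -, s, -, -, hs⟩ :=
    hIFT 1 1 (fun _ ↦ rename splitVars f) (fun _ ↦ a) (fun _ ↦ b)
      (fun _ ↦ by rw [eval_rename_splitVars, hz])
      (by
        rw [Matrix.isUnit_iff_isUnit_det, Matrix.det_fin_one, Matrix.of_apply, hpderiv,
          eval_rename_splitVars]
        exact hd.isUnit)
  refine ⟨(fun x _ ↦ x) ⁻¹' P, hP.preimage (continuous_pi fun _ ↦ continuous_id), haP,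
    fun x ↦ s (fun _ ↦ x) 0, fun x hx ↦ ?_⟩
  have hconst : s (fun _ ↦ x) = fun _ ↦ s (fun _ ↦ x) 0 :=
    funext fun i ↦ congrArg _ (Subsingleton.elim i 0)
  have := (hs _ hx).2 0
  rwa [hconst, eval_rename_splitVars] at this

end SatisfiesPolyImplicitFT

theorem stmt_2_general (K : Type*) [Field K] [TopologicalSpace K] [IsTopologicalRing K] [T2Space K]
    (hIFT : SatisfiesPolyImplicitFT K)
    (hnd : ¬ DiscreteTopology K) :
    ∀ (f : MvPolynomial (Fin 2) K) (a b : K),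
      eval ![a, b] f = 0 → eval ![a, b] (pderiv 1 f) ≠ 0 →
      {z : Fin 2 → K | eval z f = 0}.Infinite := by
  intro f a b hz hd
  obtain ⟨U, hU, haU, s, hs⟩ := hIFT.exists_isOpen_forall_eval_eq_zero hz hd
  have hinj : Set.InjOn (fun x ↦ ![x, s x]) U := fun x _ y _ h ↦ congrFun h 0
  exact ((hU.infinite_of_not_discreteTopology hnd ⟨a, haU⟩).image hinj).mono
    (Set.image_subset_iff.mpr hs)

/-- if a (Hausdorff) field topology on `K` satisfies the polynomial implicit
function theorem and is not discrete, then `K` is large: every `f ∈ K[x,y]` with a zero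
`(a,b)` at which `∂f/∂y ≠ 0` has infinitely many zeros in `K²`. -/
theorem stmt_2 (K : Type*) [Field K] [TopologicalSpace K] [IsTopologicalRing K] [T2Space K]
    (hinv : ContinuousOn (fun x : K => x⁻¹) {0}ᶜ)
    (hIFT : SatisfiesPolyImplicitFT K)
    (hnd : ¬ DiscreteTopology K) :
    ∀ (f : MvPolynomial (Fin 2) K) (a b : K),
      eval ![a, b] f = 0 → eval ![a, b] (pderiv 1 f) ≠ 0 →
      {z : Fin 2 → K | eval z f = 0}.Infinite :=
  stmt_2_general K hIFT hnd
end

section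
/- Let τ be a field topology on a field K satisfying the polynomial implicit function theorem. Then τ is gt-henselian: for every n ≥ 1 and every τ-neighborhood P of −1 there is a τ-neighborhood O of 0 such that for all a_0,...,a_{n−1} ∈ O the polynomial x^{n+1} + x^n + a_{n−1}x^{n−1} + ... + a_1 x + a_0 has a root in P. -/
open MvPolynomial

/-- The polynomial implicit function theorem for a topology on `K`, for a single
polynomial `f ∈ K[x_1,…,x_m,y]`: if `f(a,b) = 0` and `∂f/∂y(a,b) ≠ 0` then there are open
neighborhoods `P ∋ a`, `S ∋ b` and a continuous `s : P → S` with `s a = b` and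
`f(a', s a') = 0` for all `a' ∈ P`. -/
def SatisfiesPolyImplicitFT1 (K : Type*) [Field K] [TopologicalSpace K] : Prop :=
  ∀ (m : ℕ) (f : MvPolynomial (Fin m ⊕ Unit) K) (a : Fin m → K) (b : K),
    eval (Sum.elim a fun _ => b) f = 0 →
    eval (Sum.elim a fun _ => b) (pderiv (Sum.inr ()) f) ≠ 0 →
    ∃ P : Set (Fin m → K), ∃ S : Set K, IsOpen P ∧ IsOpen S ∧ a ∈ P ∧ b ∈ S ∧
      ∃ s : (Fin m → K) → K, ContinuousOn s P ∧ s a = b ∧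
        ∀ a' ∈ P, s a' ∈ S ∧ eval (Sum.elim a' fun _ => s a') f = 0

/-!
At `a = 0` the polynomial `y^(n+1) + y^n + a_(n-1) y^(n-1) + ⋯ + a_0` has the simple root
`y = -1` (its `y`-derivative there is `(-1)^n`), so the implicit function theorem yields a root
depending continuously on `a` near `0`; its preimage of `P` contains a box `O^n` around `0`.
-/

open Filter Topology

theorem exists_isOpen_forall_mem_of_mem_nhds_const {ι X : Type*} [TopologicalSpace X] {c : X}
    {U : Set (ι → X)} (hU : U ∈ 𝓝 fun _ => c) :
    ∃ O : Set X, IsOpen O ∧ c ∈ O ∧ ∀ a : ι → X, (∀ i, a i ∈ O) → a ∈ U := by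
  rw [nhds_pi, mem_pi] at hU
  obtain ⟨I, hI, t, ht, hIt⟩ := hU
  obtain ⟨O, hOt, hO, hcO⟩ := mem_nhds_iff.mp ((biInter_mem hI).mpr fun i _ => ht i)
  exact ⟨O, hO, hcO, fun a ha => hIt fun i hi => Set.mem_iInter₂.mp (hOt (ha i)) i hi⟩

namespace SatisfiesPolyImplicitFT1

variable {K : Type*} [Field K] [TopologicalSpace K]

theorem eventually_exists_root_mem (hIFT : SatisfiesPolyImplicitFT1 K) {m : ℕ}
    {f : MvPolynomial (Fin m ⊕ Unit) K} {a : Fin m → K} {b : K}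
    (hroot : eval (Sum.elim a fun _ => b) f = 0)
    (hsimple : eval (Sum.elim a fun _ => b) (pderiv (Sum.inr ()) f) ≠ 0)
    {V : Set K} (hV : V ∈ 𝓝 b) :
    ∀ᶠ a' in 𝓝 a, ∃ x ∈ V, eval (Sum.elim a' fun _ => x) f = 0 := by
  obtain ⟨P, _, hP, -, haP, -, s, hs, hsb, hsP⟩ := hIFT m f a b hroot hsimple
  have hs_at : ContinuousAt s a := hs.continuousAt (hP.mem_nhds haP)
  filter_upwards [hP.mem_nhds haP, hs_at.preimage_mem_nhds (hsb ▸ hV)] with a' ha'P ha'V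
  exact ⟨s a', ha'V, (hsP a' ha'P).2⟩

end SatisfiesPolyImplicitFT1

/-- The variables `X (inl i)` stand for the coefficients `a_i`, and `X (inr ())` for the
unknown `y`. -/
noncomputable def gtHenselPoly (K : Type*) [Field K] (n : ℕ) :
    MvPolynomial (Fin n ⊕ Unit) K :=
  X (Sum.inr ()) ^ (n + 1) + X (Sum.inr ()) ^ n +
    ∑ i : Fin n, X (Sum.inl i) * X (Sum.inr ()) ^ (i : ℕ)

section gtHenselPoly

variable {K : Type*} [Field K] {n : ℕ}

theorem eval_gtHenselPoly (a : Fin n → K) (x : K) :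
    eval (Sum.elim a fun _ => x) (gtHenselPoly K n)
      = x ^ (n + 1) + x ^ n + ∑ i : Fin n, a i * x ^ (i : ℕ) := by
  simp [gtHenselPoly]

theorem eval_gtHenselPoly_zero_neg_one : eval (Sum.elim 0 fun _ => -1) (gtHenselPoly K n) = 0 := by
  simp [eval_gtHenselPoly, pow_succ]

theorem eval_pderiv_gtHenselPoly_zero_neg_one :
    eval (Sum.elim 0 fun _ => -1) (pderiv (Sum.inr ()) (gtHenselPoly K n)) = (-1) ^ n := by
  simp only [gtHenselPoly, map_add, map_sum, pderiv_mul, pderiv_X_self, pderiv_pow, pderiv_X,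
    Pi.single_eq_of_ne (Sum.inl_ne_inr : (Sum.inl _ : Fin n ⊕ Unit) ≠ Sum.inr ())]
  cases n with
  | zero => simp
  | succ n =>
    simp only [Nat.cast_add, Nat.cast_one, add_tsub_cancel_right, pow_succ, mul_one, map_mul,
      map_add, map_natCast, map_one, map_pow, eval_X, Sum.elim_inr, mul_neg, zero_mul, map_zero,
      Sum.elim_inl, Pi.zero_apply, add_zero, Finset.sum_const_zero]
    ring

end gtHenselPoly

theorem stmt_4_general (K : Type*) [Field K] [TopologicalSpace K]
    (hIFT : SatisfiesPolyImplicitFT1 K) :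
    ∀ n : ℕ, 1 ≤ n → ∀ P : Set K, IsOpen P → (-1 : K) ∈ P →
      ∃ O : Set K, IsOpen O ∧ (0 : K) ∈ O ∧
        ∀ a : Fin n → K, (∀ i, a i ∈ O) →
          ∃ x ∈ P, x ^ (n + 1) + x ^ n + ∑ i : Fin n, a i * x ^ (i : ℕ) = 0 := by
  intro n _ P hP hP_neg_one
  have h_roots := hIFT.eventually_exists_root_mem eval_gtHenselPoly_zero_neg_one
    (by rw [eval_pderiv_gtHenselPoly_zero_neg_one]; exact pow_ne_zero n (by norm_num))
    (hP.mem_nhds hP_neg_one)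
  obtain ⟨O, hO, h0O, hOU⟩ := exists_isOpen_forall_mem_of_mem_nhds_const h_roots
  refine ⟨O, hO, h0O, fun a ha => ?_⟩
  simpa only [Set.mem_ofPred_eq, eval_gtHenselPoly] using hOU a ha

/-- a field topology satisfying the polynomial implicit function theorem is
gt-henselian: for every `n ≥ 1` and neighborhood `P` of `-1` there is a neighborhood `O`
of `0` such that `x^(n+1) + x^n + a_(n-1)x^(n-1) + ⋯ + a_0` has a root in `P` whenever all
`a_i ∈ O`. -/
theorem stmt_4 (K : Type*) [Field K] [TopologicalSpace K] [IsTopologicalRing K] [T2Space K]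
    (hinv : ContinuousOn (fun x : K => x⁻¹) {0}ᶜ)
    (hIFT : SatisfiesPolyImplicitFT1 K) :
    ∀ n : ℕ, 1 ≤ n → ∀ P : Set K, IsOpen P → (-1 : K) ∈ P →
      ∃ O : Set K, IsOpen O ∧ (0 : K) ∈ O ∧
        ∀ a : Fin n → K, (∀ i, a i ∈ O) →
          ∃ x ∈ P, x ^ (n + 1) + x ^ n + ∑ i : Fin n, a i * x ^ (i : ℕ) = 0 :=
  stmt_4_general K hIFT
end

section
/- Let K be a field, d ≥ 1, and consider the map μ: K^m × K^n → K^{m+n} sending a pair of monic polynomials (p, q) of degrees m and n (identified with their coefficient tuples) to the coefficient tuple of the product pq. Then the corresponding ring map K[z_1,...,z_{m+n}] → K[x_1,...,x_m, y_1,...,y_n] (sending the coefficients of a generic monic degree m+n polynomial to the coefficients of the product of generic monic polynomials of degrees m and n) makes K[x,y] a finitely generated module over the image; equivalently, the morphism 𝔸^m × 𝔸^n → 𝔸^{m+n} given by multiplication of monic polynomials is a finite morphism of affine varieties. -/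
/-!
Multiplication of monic polynomials is represented by `MvPolynomial.universalFactorizationMap`,
with target `K[x] ⊗ K[y]`, and this map is finite: it is of finite type and integral, since the
coefficients of monic factors of a monic polynomial are integral over its coefficients. Composing
with `K[x] ⊗ K[y] ≃ K[x, y]` gives the map of the theorem, because an algebra map out of
`K[z_1, …, z_N]` is determined by the image of the generic monic polynomial of degree `N`.
-/

open Polynomial

namespace MvPolynomial

variable (R : Type*) [CommRing R] (m n : ℕ)

lemma map_rename_freeMonic {σ : Type*} (e : Fin m → σ) :
    (freeMonic R m).map (rename e).toRingHom =
      .X ^ m + ∑ i : Fin m, .C (X (e i)) * .X ^ (i : ℕ) := by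
  simp [freeMonic, Polynomial.map_sum]

lemma map_freeMonic_tensorEquivSum_comp_universalFactorizationMap :
    (freeMonic R (m + n)).map ((tensorEquivSum R (Fin m) (Fin n) R).toAlgHom.comp
        (universalFactorizationMap R (m + n) m n rfl)).toRingHom =
      (freeMonic R m).map (rename Sum.inl).toRingHom *
        (freeMonic R n).map (rename Sum.inr).toRingHom := by
  rw [AlgHom.toRingHom_eq_coe, AlgHom.comp_toRingHom, ← Polynomial.map_map,
    ← AlgHom.toRingHom_eq_coe, universalFactorizationMap_freeMonic,
    Polynomial.map_mul, Polynomial.map_map, Polynomial.map_map]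
  congr 2 <;> ext <;> simp

lemma eq_aeval_coeff_map_freeMonic {S : Type*} [CommRing S] [Algebra R S]
    (g : MvPolynomial (Fin n) R →ₐ[R] S) :
    g = aeval fun k : Fin n => ((freeMonic R n).map g.toRingHom).coeff k :=
  ((mapEquivMonic R S n).symm_apply_apply g).symm

lemma finite_aeval_coeff_mul_map_rename_freeMonic :
    (aeval (R := R) fun k : Fin (m + n) => ((freeMonic R m).map (rename Sum.inl).toRingHom *
        (freeMonic R n).map (rename Sum.inr).toRingHom).coeff k).toRingHom.Finite := by
  rw [← map_freeMonic_tensorEquivSum_comp_universalFactorizationMap,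
    ← eq_aeval_coeff_map_freeMonic, AlgHom.toRingHom_eq_coe, AlgHom.comp_toRingHom]
  exact .comp (.of_surjective _ (tensorEquivSum R (Fin m) (Fin n) R).surjective)
    (finite_universalFactorizationMap R (m + n) m n rfl)

end MvPolynomial

theorem stmt_6_general (K : Type*) [Field K] (m n : ℕ)
    (p q : Polynomial (MvPolynomial (Fin m ⊕ Fin n) K))
    (hp : p = X ^ m + ∑ i : Fin m, C (MvPolynomial.X (Sum.inl i)) * X ^ (i : ℕ))
    (hq : q = X ^ n + ∑ j : Fin n, C (MvPolynomial.X (Sum.inr j)) * X ^ (j : ℕ)) :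
    RingHom.Finite
      (MvPolynomial.aeval (R := K)
        (fun k : Fin (m + n) => (p * q).coeff (k : ℕ))).toRingHom := by
  rw [hp, hq, ← MvPolynomial.map_rename_freeMonic, ← MvPolynomial.map_rename_freeMonic]
  exact MvPolynomial.finite_aeval_coeff_mul_map_rename_freeMonic K m n

/-- multiplication of monic polynomials, `𝔸^m × 𝔸^n → 𝔸^(m+n)`, is a finite
morphism: the ring map sending the coefficients of a generic monic polynomial of degree
`m + n` to the coefficients of the product of generic monic polynomials of degrees `m`
and `n` makes `K[x_1,…,x_m,y_1,…,y_n]` a finite module over (the image of)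
`K[z_1,…,z_(m+n)]`. -/
theorem stmt_6 (K : Type*) [Field K] (m n : ℕ) (hm : 1 ≤ m) (hn : 1 ≤ n)
    (p q : Polynomial (MvPolynomial (Fin m ⊕ Fin n) K))
    (hp : p = X ^ m + ∑ i : Fin m, C (MvPolynomial.X (Sum.inl i)) * X ^ (i : ℕ))
    (hq : q = X ^ n + ∑ j : Fin n, C (MvPolynomial.X (Sum.inr j)) * X ^ (j : ℕ)) :
    RingHom.Finite
      (MvPolynomial.aeval (R := K)
        (fun k : Fin (m + n) => (p * q).coeff (k : ℕ))).toRingHom :=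
  stmt_6_general K m n p q hp hq
end

section
/- Let K be a field, let L/K be a finite Galois extension with group G = Gal(L/K), and let p, q ∈ K[x] be monic polynomials of the same degree d that both split into d distinct roots in L. If the G-sets of roots of p in L and of roots of q in L are isomorphic as G-sets, then the K-algebras K[x]/(p) and K[x]/(q) are isomorphic. -/
/-!
For `p` separable and split in `L`, evaluation at the roots identifies `K[x]/(p)` with the
`K`-algebra of `Gal(L/K)`-equivariant maps from the roots of `p` to `L`. It is injective because
over `L` the polynomial `p` is a product of distinct linear factors, and surjective because the
Lagrange interpolant of equivariant data is fixed by `Gal(L/K)`, hence has coefficients in `K`.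
An isomorphism of `Gal(L/K)`-sets between the roots of `p` and of `q` then transports equivariant
maps by precomposition.
-/

open Polynomial

section Galois

variable (K L : Type*) [Field K] [Field L] [Algebra K L]

def equivariantFunctions (X : Type*) [MulAction (L ≃ₐ[K] L) X] : Subalgebra K (X → L) where
  carrier := {f | ∀ (σ : L ≃ₐ[K] L) x, f (σ • x) = σ • f x}
  mul_mem' hf hg σ x := by simp only [Pi.mul_apply, hf σ x, hg σ x, smul_mul']
  add_mem' hf hg σ x := by simp only [Pi.add_apply, hf σ x, hg σ x, smul_add]
  algebraMap_mem' c σ x := (σ.commutes c).symm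

variable {K L}

noncomputable def equivariantFunctions.congr {X Y : Type*} [MulAction (L ≃ₐ[K] L) X]
    [MulAction (L ≃ₐ[K] L) Y] (e : X ≃ Y) (he : ∀ (σ : L ≃ₐ[K] L) x, e (σ • x) = σ • e x) :
    equivariantFunctions K L X ≃ₐ[K] equivariantFunctions K L Y :=
  ((AlgEquiv.piCongrLeft' K (fun _ => L) e).subalgebraMap _).trans
    (Subalgebra.equivOfEq _ _ <| by
      ext φ
      constructor
      · rintro ⟨ψ, hψ, rfl⟩ σ y
        obtain ⟨x, rfl⟩ := e.surjective y
        simp [← he, hψ σ x]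
      · intro hφ
        refine ⟨φ ∘ e, fun σ x => by simp [he, hφ σ], ?_⟩
        ext y
        simp)

theorem Polynomial.mem_lifts_of_forall_smul_eq [FiniteDimensional K L] [IsGalois K L]
    (F : L[X]) (hF : ∀ σ : L ≃ₐ[K] L, σ • F = F) : F ∈ lifts (algebraMap K L) := by
  refine (lifts_iff_coeff_lifts F).mpr fun n => ?_
  refine (IsGalois.mem_range_algebraMap_iff_fixed _).mpr fun σ => ?_
  rw [← AlgEquiv.smul_def, ← coeff_smul, hF σ]

theorem exists_aeval_eq_of_mem_equivariantFunctions [FiniteDimensional K L] [IsGalois K L]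
    {ι : Type*} [Fintype ι] [MulAction (L ≃ₐ[K] L) ι] (ν : ι → L) (hν : Function.Injective ν)
    (hν_smul : ∀ (σ : L ≃ₐ[K] L) i, ν (σ • i) = σ • ν i)
    {φ : ι → L} (hφ : φ ∈ equivariantFunctions K L ι) :
    ∃ g : K[X], ∀ i, aeval (ν i) g = φ i := by
  classical
  have hinj : Set.InjOn ν (Finset.univ : Finset ι) := hν.injOn
  set F := Lagrange.interpolate Finset.univ ν φ
  have hF : ∀ i, F.eval (ν i) = φ i := fun i =>
    Lagrange.eval_interpolate_at_node φ hinj (Finset.mem_univ i)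
  -- The interpolating polynomial is unique, and `σ • F` interpolates the same data.
  have hF_fixed : ∀ σ : L ≃ₐ[K] L, σ • F = F := by
    intro σ
    refine Lagrange.eq_interpolate_of_eval_eq φ hinj
      ((degree_smul_le σ F).trans_lt (Lagrange.degree_interpolate_lt φ hinj)) fun i _ => ?_
    rw [smul_eval, ← hν_smul, hF, hφ, smul_inv_smul]
  obtain ⟨g, hg⟩ := (mem_lifts F).mp (F.mem_lifts_of_forall_smul_eq hF_fixed)
  exact ⟨g, fun i => by rw [aeval_def, ← eval_map, hg, hF]⟩

theorem Polynomial.separable_of_card_roots_toFinset_eq [DecidableEq L] {p : K[X]} (hp : p ≠ 0)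
    (hs : (p.map (algebraMap K L)).Splits)
    (hcard : (p.map (algebraMap K L)).roots.toFinset.card = p.natDegree) : p.Separable := by
  rw [← nodup_aroots_iff_of_splits hp hs, aroots_def, ← Multiset.toFinset_card_eq_card_iff_nodup,
    hcard, ← hs.natDegree_eq_card_roots, natDegree_map]

theorem Polynomial.dvd_of_forall_mem_rootSet_aeval_eq_zero {p : K[X]} (hp : p.Separable)
    (hs : (p.map (algebraMap K L)).Splits) {g : K[X]}
    (hg : ∀ x ∈ p.rootSet L, aeval x g = 0) : p ∣ g := by
  rcases eq_or_ne g 0 with rfl | hg0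
  · exact dvd_zero p
  rw [← map_dvd_map' (algebraMap K L)]
  refine hs.dvd_of_roots_le_roots (map_ne_zero hp.ne_zero) ?_
  rw [Multiset.le_iff_subset (nodup_roots hp.map)]
  intro x hx
  rw [← aroots_def, mem_aroots] at hx ⊢
  exact ⟨hg0, hg x ((mem_rootSet_of_ne hp.ne_zero).mpr hx.2)⟩

variable (L) in
noncomputable def AdjoinRoot.evalRootSet (p : K[X]) : AdjoinRoot p →ₐ[K] (p.rootSet L → L) :=
  AlgHom.pi fun x => AdjoinRoot.liftAlgHom p (Algebra.ofId K L) x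
    (by rw [Algebra.toRingHom_ofId, ← aeval_def]; exact aeval_eq_zero_of_mem_rootSet x.2)

theorem AdjoinRoot.evalRootSet_mk (p g : K[X]) (x : p.rootSet L) :
    evalRootSet L p (mk p g) x = aeval (x : L) g := by
  simp [evalRootSet, liftAlgHom_mk, aeval_def]

theorem AdjoinRoot.evalRootSet_mem_equivariantFunctions (p : K[X]) (z : AdjoinRoot p) :
    evalRootSet L p z ∈ equivariantFunctions K L (p.rootSet L) := by
  induction z using AdjoinRoot.induction_on with
  | ih g => intro σ x; simp only [evalRootSet_mk, rootSet.coe_smul, aeval_smul]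

theorem AdjoinRoot.evalRootSet_injective {p : K[X]} (hp : p.Separable)
    (hs : (p.map (algebraMap K L)).Splits) : Function.Injective (evalRootSet L p) := by
  rw [injective_iff_map_eq_zero]
  intro z hz
  induction z using AdjoinRoot.induction_on with
  | ih g =>
    refine mk_eq_zero.mpr (dvd_of_forall_mem_rootSet_aeval_eq_zero hp hs fun x hx => ?_)
    simpa only [evalRootSet_mk, Pi.zero_apply] using congrFun hz ⟨x, hx⟩

theorem AdjoinRoot.exists_evalRootSet_eq [FiniteDimensional K L] [IsGalois K L] (p : K[X])
    {φ : p.rootSet L → L} (hφ : φ ∈ equivariantFunctions K L (p.rootSet L)) :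
    ∃ z, evalRootSet L p z = φ := by
  obtain ⟨g, hg⟩ := exists_aeval_eq_of_mem_equivariantFunctions Subtype.val
    Subtype.val_injective (fun _ _ => rfl) hφ
  exact ⟨mk p g, funext fun x => by rw [evalRootSet_mk, hg]⟩

variable (L) in
noncomputable def AdjoinRoot.equivEquivariantFunctions [FiniteDimensional K L] [IsGalois K L]
    {p : K[X]} (hp : p.Separable) (hs : (p.map (algebraMap K L)).Splits) :
    AdjoinRoot p ≃ₐ[K] equivariantFunctions K L (p.rootSet L) :=
  AlgEquiv.ofBijective
    ((evalRootSet L p).codRestrict _ (evalRootSet_mem_equivariantFunctions p))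
    ⟨fun _ _ h => evalRootSet_injective hp hs (congrArg Subtype.val h),
      fun φ => (exists_evalRootSet_eq p φ.2).imp fun _ h => Subtype.ext h⟩

end Galois

/-- let `L/K` be finite Galois, and `p, q ∈ K[x]` monic of degree `d`, each
splitting into `d` distinct roots in `L`. If the sets of roots of `p` and of `q` in `L`
are isomorphic as `Gal(L/K)`-sets, then `K[x]/(p)` and `K[x]/(q)` are isomorphic as
`K`-algebras. -/
theorem stmt_8 (K L : Type*) [Field K] [Field L] [Algebra K L] [DecidableEq L]
    [FiniteDimensional K L] [IsGalois K L]
    (d : ℕ) (p q : K[X]) (hpm : p.Monic) (hqm : q.Monic)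
    (hpd : p.natDegree = d) (hqd : q.natDegree = d)
    (hps : (p.map (algebraMap K L)).Splits) (hqs : (q.map (algebraMap K L)).Splits)
    (hpc : (p.map (algebraMap K L)).roots.toFinset.card = d)
    (hqc : (q.map (algebraMap K L)).roots.toFinset.card = d)
    (e : L → L)
    (hbij : Set.BijOn e ((p.map (algebraMap K L)).roots.toFinset : Set L)
      ((q.map (algebraMap K L)).roots.toFinset : Set L))
    (hequiv : ∀ σ : L ≃ₐ[K] L, ∀ x ∈ ((p.map (algebraMap K L)).roots.toFinset : Set L),
      e (σ x) = σ (e x)) :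
    Nonempty (AdjoinRoot p ≃ₐ[K] AdjoinRoot q) := by
  have hp := separable_of_card_roots_toFinset_eq hpm.ne_zero hps (hpc.trans hpd.symm)
  have hq := separable_of_card_roots_toFinset_eq hqm.ne_zero hqs (hqc.trans hqd.symm)
  rw [← aroots_def, ← aroots_def, ← rootSet_def, ← rootSet_def] at hbij
  rw [← aroots_def, ← rootSet_def] at hequiv
  exact ⟨(AdjoinRoot.equivEquivariantFunctions L hp hps).trans <|
    (equivariantFunctions.congr (hbij.equiv e) fun σ x => Subtype.ext (hequiv σ x x.2)).trans
      (AdjoinRoot.equivEquivariantFunctions L hq hqs).symm⟩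
end

section
/- Let K be a field and let R be a local subring of K that is henselian and whose fraction field is K, with R ≠ K. Define the R-adic topology on K to have as basis the sets aR + b for a ∈ K^×, b ∈ K. Then this topology makes K a (Hausdorff, nondiscrete) topological field, i.e., addition, multiplication, and inversion (on K^×) are continuous. -/
/-!
Since `K` is the fraction field of `R`, each `aR` (`a ≠ 0`) contains some `b ≠ 0` of `R`, hence
also `bR`; so the subgroups `aR` form a basis of neighbourhoods of `0` for a ring topology, whose
cosets `aR + b` are then a basis of that topology. As `R ≠ K`, `R` has a nonzero nonunit `m`,
and `x ∉ xmR` for `x ≠ 0` makes the topology Hausdorff. Because `R` is local, `1 + y` is a unit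
of `R` for every `y ∈ cmR` with `c ∈ R`, so `(1 + y)⁻¹ - 1 = -y (1 + y)⁻¹ ∈ cmR`: inversion
is continuous at `1`, hence at every nonzero point.
-/

open TopologicalSpace

namespace RingSubgroupsBasis

variable {A ι : Type*} [Ring A] [Nonempty ι] {B : ι → AddSubgroup A}

theorem isTopologicalBasis_cosets (hB : RingSubgroupsBasis B) :
    @IsTopologicalBasis A hB.topology {S | ∃ i a, S = {x | x - a ∈ B i}} := by
  let := hB.topology
  have := hB.toRingFilterBasis.isTopologicalRing
  refine isTopologicalBasis_of_isOpen_of_nhds ?_ fun a u hau hu => ?_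
  · rintro _ ⟨i, a, rfl⟩
    exact (hB.openAddSubgroup i).isOpen.preimage (continuous_sub_right a)
  · obtain ⟨i, -, hi⟩ := (hB.hasBasis_nhds a).mem_iff.mp (hu.mem_nhds hau)
    exact ⟨_, ⟨i, a, rfl⟩, by simp, hi⟩

end RingSubgroupsBasis

namespace Subring

variable {K : Type*} [Field K] (R : Subring K)

def adicSubgroup (a : K) : AddSubgroup K where
  carrier := {x | ∃ r : R, x = a * r}
  zero_mem' := ⟨0, by simp⟩
  add_mem' := by rintro _ _ ⟨r, rfl⟩ ⟨s, rfl⟩; exact ⟨r + s, by push_cast; ring⟩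
  neg_mem' := by rintro _ ⟨r, rfl⟩; exact ⟨-r, by push_cast; ring⟩

variable {R}

theorem mem_adicSubgroup {a x : K} : x ∈ R.adicSubgroup a ↔ ∃ r : R, x = a * r := Iff.rfl

theorem self_mem_adicSubgroup (a : K) : a ∈ R.adicSubgroup a := ⟨1, by simp⟩

theorem mul_mem_adicSubgroup {a x y : K} (hx : x ∈ R.adicSubgroup a) (hy : y ∈ R) :
    x * y ∈ R.adicSubgroup a := by
  obtain ⟨r, rfl⟩ := hx
  exact ⟨r * ⟨y, hy⟩, by push_cast; ring⟩

theorem mem_of_mem_adicSubgroup {a x : K} (ha : a ∈ R) (hx : x ∈ R.adicSubgroup a) :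
    x ∈ R := by
  obtain ⟨r, rfl⟩ := hx
  exact R.mul_mem ha r.2

theorem adicSubgroup_le_of_mem {a b : K} (hb : b ∈ R.adicSubgroup a) :
    R.adicSubgroup b ≤ R.adicSubgroup a := by
  rintro _ ⟨r, rfl⟩
  exact mul_mem_adicSubgroup hb r.2

theorem adicSubgroup_mul_le (a : K) {b : K} (hb : b ∈ R) :
    R.adicSubgroup (a * b) ≤ R.adicSubgroup a :=
  adicSubgroup_le_of_mem (mul_mem_adicSubgroup (self_mem_adicSubgroup a) hb)

theorem setOf_sub_mem_adicSubgroup (a b : K) :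
    {x | x - b ∈ R.adicSubgroup a} = {x | ∃ r : R, x = a * r + b} := by
  simp only [mem_adicSubgroup, sub_eq_iff_eq_add]

theorem inv_mem_of_isUnit {u : R} (hu : IsUnit u) : (u : K)⁻¹ ∈ R := by
  obtain ⟨v, rfl⟩ := hu
  exact map_units_inv R.subtype v ▸ (↑v⁻¹ : R).2

theorem inv_one_add_sub_one_mem_adicSubgroup [IsLocalRing R] {m : R} (hm : ¬IsUnit m) {y : K}
    (hy : y ∈ R.adicSubgroup m) : (1 + y)⁻¹ - 1 ∈ R.adicSubgroup m := by
  obtain ⟨r, rfl⟩ := hy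
  have hunit : IsUnit (1 + m * r) := by
    simpa using IsLocalRing.isUnit_one_sub_self_of_mem_nonunits (-(m * r))
      (fun h => hm (isUnit_of_mul_isUnit_left (by simpa using h.neg)))
  have hne : (1 + m * r : K) ≠ 0 := by exact_mod_cast (Subtype.coe_injective.ne hunit.ne_zero)
  refine ⟨-r * ⟨_, inv_mem_of_isUnit hunit⟩, ?_⟩
  push_cast
  field_simp
  ring

variable [IsFractionRing R K]

theorem exists_mem_adicSubgroup {a : K} (ha : a ≠ 0) :
    ∃ b ∈ R, b ≠ 0 ∧ b ∈ R.adicSubgroup a := by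
  obtain ⟨p, q, hq, rfl⟩ := IsFractionRing.div_surjective R a
  have hq0 : (q : K) ≠ 0 := IsFractionRing.to_map_ne_zero_of_mem_nonZeroDivisors hq
  refine ⟨p, p.2, fun hp => ha (by rw [show algebraMap R K p = 0 from hp, zero_div]), q, ?_⟩
  exact (div_mul_cancel₀ _ hq0).symm

theorem exists_ne_zero_not_isUnit (hR : R ≠ ⊤) : ∃ m : R, m ≠ 0 ∧ ¬IsUnit m := by
  by_contra! hunit
  refine hR (eq_top_iff.2 fun z _ => ?_)
  obtain ⟨p, q, hq, rfl⟩ := IsFractionRing.div_surjective R z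
  rw [div_eq_mul_inv]
  exact R.mul_mem p.2 (inv_mem_of_isUnit (hunit q (nonZeroDivisors.ne_zero hq)))

variable (R) in
theorem ringSubgroupsBasis_adicSubgroup : RingSubgroupsBasis fun a : Kˣ => R.adicSubgroup a := by
  refine .of_comm _ (fun a a' => ?_) (fun a => ?_) (fun x a => ?_)
  · obtain ⟨b, hbR, hb0, hba⟩ := exists_mem_adicSubgroup (R := R) a.ne_zero
    obtain ⟨b', hbR', hb0', hba'⟩ := exists_mem_adicSubgroup (R := R) a'.ne_zero
    refine ⟨Units.mk0 (b * b') (mul_ne_zero hb0 hb0'), le_inf ?_ ?_⟩ <;> rw [Units.val_mk0]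
    · exact (adicSubgroup_mul_le b hbR').trans (adicSubgroup_le_of_mem hba)
    · rw [mul_comm]
      exact (adicSubgroup_mul_le b' hbR).trans (adicSubgroup_le_of_mem hba')
  · obtain ⟨b, hbR, hb0, hba⟩ := exists_mem_adicSubgroup (R := R) a.ne_zero
    refine ⟨Units.mk0 b hb0, ?_⟩
    rintro _ ⟨x, hx, y, hy, rfl⟩
    exact adicSubgroup_le_of_mem hba (mul_mem_adicSubgroup hx (mem_of_mem_adicSubgroup hbR hy))
  · rcases eq_or_ne x 0 with rfl | hx
    · exact ⟨a, fun y _ => by simp⟩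
    · refine ⟨Units.mk0 (a / x) (div_ne_zero a.ne_zero hx), ?_⟩
      rintro _ ⟨r, rfl⟩
      exact ⟨r, by rw [Units.val_mk0]; field_simp⟩

variable (R) in
abbrev adicTopology : TopologicalSpace K :=
  (ringSubgroupsBasis_adicSubgroup R).topology

theorem isTopologicalRing_adicTopology : @IsTopologicalRing K (adicTopology R) _ :=
  (ringSubgroupsBasis_adicSubgroup R).toRingFilterBasis.isTopologicalRing

theorem generateFrom_eq_adicTopology :
    generateFrom {S : Set K | ∃ a b : K, a ≠ 0 ∧ S = {x | ∃ r : R, x = a * r + b}} =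
      adicTopology R := by
  let := adicTopology R
  rw [adicTopology, (ringSubgroupsBasis_adicSubgroup R).isTopologicalBasis_cosets.eq_generateFrom]
  congr 1
  ext S
  simp only [setOf_sub_mem_adicSubgroup, Set.mem_ofPred_eq]
  constructor
  · rintro ⟨a, b, ha, rfl⟩
    exact ⟨Units.mk0 a ha, b, rfl⟩
  · rintro ⟨a, b, rfl⟩
    exact ⟨a, b, a.ne_zero, rfl⟩

theorem t2Space_adicTopology (hR : R ≠ ⊤) : @T2Space K (adicTopology R) := by
  let := adicTopology R
  have := isTopologicalRing_adicTopology (R := R)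
  obtain ⟨m, hm0, hm⟩ := exists_ne_zero_not_isUnit hR
  refine IsTopologicalAddGroup.t2Space_of_zero_sep fun x hx => ?_
  have hxm : x * m ≠ 0 := mul_ne_zero hx (by exact_mod_cast hm0)
  have hB := ringSubgroupsBasis_adicSubgroup R
  refine ⟨_, hB.hasBasis_nhds_zero.mem_of_mem (i := Units.mk0 _ hxm) trivial, ?_⟩
  rintro ⟨r, hr⟩
  refine hm (IsUnit.of_mul_eq_one r (Subtype.ext ?_))
  simpa [mul_assoc, hx] using hr.symm

theorem continuousInv₀_adicTopology [IsLocalRing R] (hR : R ≠ ⊤) :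
    @ContinuousInv₀ K _ _ (adicTopology R) := by
  let := adicTopology R
  have := isTopologicalRing_adicTopology (R := R)
  have hB := ringSubgroupsBasis_adicSubgroup R
  refine .of_nhds_one ((hB.hasBasis_nhds 1).tendsto_iff (hB.hasBasis_nhds 1) |>.mpr fun a _ => ?_)
  obtain ⟨b, hbR, hb0, hba⟩ := exists_mem_adicSubgroup (R := R) a.ne_zero
  obtain ⟨m, hm0, hm⟩ := exists_ne_zero_not_isUnit hR
  let c : R := ⟨b, hbR⟩ * m
  have hc0 : (c : K) ≠ 0 := mul_ne_zero hb0 (by exact_mod_cast hm0)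
  have hc : ¬IsUnit c := fun h => hm (isUnit_of_mul_isUnit_right h)
  refine ⟨Units.mk0 _ hc0, trivial, fun z hz => ?_⟩
  have key := inv_one_add_sub_one_mem_adicSubgroup hc hz
  rw [add_sub_cancel] at key
  exact adicSubgroup_le_of_mem hba (adicSubgroup_mul_le b m.2 key)

theorem adicTopology_ne_bot : adicTopology R ≠ ⊥ := by
  intro hbot
  have h0 : ({0} : Set K) ∈ @nhds K (adicTopology R) 0 := by
    rw [hbot]
    exact @IsOpen.mem_nhds K ⊥ _ _ (@isOpen_discrete K ⊥ (discreteTopology_bot K) _) rfl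
  obtain ⟨a, -, ha⟩ := (ringSubgroupsBasis_adicSubgroup R).hasBasis_nhds_zero.mem_iff.mp h0
  exact a.ne_zero (ha (self_mem_adicSubgroup _))

end Subring

theorem stmt_10_general (K : Type*) [Field K] (R : Subring K) [IsLocalRing R]
    [IsFractionRing R K] (hR : R ≠ ⊤) :
    ∀ t : TopologicalSpace K,
      t = TopologicalSpace.generateFrom
        {S : Set K | ∃ a b : K, a ≠ 0 ∧ S = {x : K | ∃ r : R, x = a * (r : K) + b}} →
      @IsTopologicalRing K t _ ∧
      @ContinuousOn K K t t (fun x => x⁻¹) {0}ᶜ ∧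
      @T2Space K t ∧
      t ≠ ⊥ := by
  rintro t rfl
  rw [Subring.generateFrom_eq_adicTopology]
  let := Subring.adicTopology R
  have := Subring.continuousInv₀_adicTopology hR
  exact ⟨Subring.isTopologicalRing_adicTopology, continuousOn_inv₀,
    Subring.t2Space_adicTopology hR, Subring.adicTopology_ne_bot⟩

/-- let `R` be a proper henselian local subring of `K` with fraction field
`K`. The `R`-adic topology on `K`, generated by the sets `aR + b` for `a ∈ Kˣ`, `b ∈ K`,
makes `K` a Hausdorff, nondiscrete topological field: addition and multiplication are
continuous (`TopologicalRing`), inversion is continuous away from `0`, the topology is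
Hausdorff, and it is not discrete. -/
theorem stmt_10 (K : Type*) [Field K] (R : Subring K) [IsLocalRing R]
    [HenselianLocalRing R] [IsFractionRing R K] (hR : R ≠ ⊤) :
    ∀ t : TopologicalSpace K,
      t = TopologicalSpace.generateFrom
        {S : Set K | ∃ a b : K, a ≠ 0 ∧ S = {x : K | ∃ r : R, x = a * (r : K) + b}} →
      @IsTopologicalRing K t _ ∧
      @ContinuousOn K K t t (fun x => x⁻¹) {0}ᶜ ∧
      @T2Space K t ∧
      t ≠ ⊥ :=
  stmt_10_general K R hR
end

section
/- Let K be a field, L/K a purely inseparable algebraic extension, and p ∈ K[x] a monic polynomial. Then p is irreducible in K[x] and separable if and only if p is irreducible in L[x] and separable. In particular, a separable monic polynomial over K is irreducible over K if and only if it is irreducible over the perfect closure of K. -/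
open Polynomial

/-- for a purely inseparable algebraic extension `L/K` and a monic
`p ∈ K[x]`, `p` is irreducible and separable over `K` iff its image in `L[x]` is
irreducible and separable. -/
theorem stmt_16 (K L : Type*) [Field K] [Field L] [Algebra K L]
    [Algebra.IsAlgebraic K L] [IsPurelyInseparable K L]
    (p : K[X]) (hp : p.Monic) :
    (Irreducible p ∧ p.Separable) ↔
      (Irreducible (p.map (algebraMap K L)) ∧ (p.map (algebraMap K L)).Separable) := by
  constructor
  · rintro ⟨hirr, hsep⟩
    exact ⟨hsep.map_irreducible_of_isPurelyInseparable L hirr, hsep.map⟩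
  · rintro ⟨hirr, hsep⟩
    exact ⟨hp.irreducible_of_irreducible_map _ _ hirr,
      (separable_map (algebraMap K L)).1 hsep⟩
end
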